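/- Let u : [−2,2] → ℝ² be a function that is differentiable within [−2,2] at every t ∈ [−2,2], with u(−2) = (−3, 9·sin(−1/3)) and u'(t) = (1, g(u₁(t))) for all t ∈ [−2,2], where u₁ is the first component of u. Then u(t) = (t − 1, G(t − 1)) for all t ∈ [−2,2]; that is, the initial value problem u' = f ∘ u, u(−2) = (−3, 9·sin(−1/3)) with f(x, z) = (1, g(x)) has a unique solution on [−2,2]. -/

import Mathlib

open Set

/-- `g(x) = 2x sin(1/x) − cos(1/x)` for `x ≠ 0`, `g(0) = 0`. -/
noncomputable def gFun (x : ℝ) : ℝ :=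
  if x = 0 then 0 else 2 * x * Real.sin (1 / x) - Real.cos (1 / x)

/-- `G(x) = x² sin(1/x)` for `x ≠ 0`, `G(0) = 0`. -/
noncomputable def GFun (x : ℝ) : ℝ :=
  if x = 0 then 0 else x ^ 2 * Real.sin (1 / x)

/-
The first component of a solution has derivative `1`, so `u₁ t = t - 1`; then
`u₂' t = g (t - 1) = G' (t - 1)`, and `G` is differentiable everywhere (also at `0`, where
`|G x| ≤ x²`), so `u₂ t = G (t - 1)`. Both steps are uniqueness of a function on an interval
from its derivative and its initial value (mean value inequality).
-/

section Prod

variable {𝕜 F G : Type*} [NontriviallyNormedField 𝕜] [NormedAddCommGroup F] [NormedSpace 𝕜 F]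
  [NormedAddCommGroup G] [NormedSpace 𝕜 G] {f : 𝕜 → F × G} {f' : F × G} {s : Set 𝕜} {x : 𝕜}

theorem HasDerivWithinAt.fst (h : HasDerivWithinAt f f' s x) :
    HasDerivWithinAt (fun y => (f y).1) f'.1 s x := by
  simpa using h.hasFDerivWithinAt.fst.hasDerivWithinAt

theorem HasDerivWithinAt.snd (h : HasDerivWithinAt f f' s x) :
    HasDerivWithinAt (fun y => (f y).2) f'.2 s x := by
  simpa using h.hasFDerivWithinAt.snd.hasDerivWithinAt

end Prod

theorem eqOn_Icc_of_hasDerivWithinAt_eq {E : Type*} [NormedAddCommGroup E] [NormedSpace ℝ E]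
    {f g f' : ℝ → E} {a b : ℝ}
    (hf : ∀ x ∈ Icc a b, HasDerivWithinAt f (f' x) (Icc a b) x)
    (hg : ∀ x ∈ Icc a b, HasDerivWithinAt g (f' x) (Icc a b) x) (ha : f a = g a) :
    EqOn f g (Icc a b) := by
  have right {h : ℝ → E} (hh : ∀ x ∈ Icc a b, HasDerivWithinAt h (f' x) (Icc a b) x) :
      ∀ x ∈ Ico a b, HasDerivWithinAt h (f' x) (Ici x) x := fun x hx =>
    (hh x (Ico_subset_Icc_self hx)).mono_of_mem_nhdsWithin (Icc_mem_nhdsGE_of_mem hx)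
  exact eq_of_has_deriv_right_eq (right hf) (right hg)
    (fun x hx => (hf x hx).continuousWithinAt) (fun x hx => (hg x hx).continuousWithinAt) ha

-- The case `x = 0` holds because `sin (1 / 0) = sin 0 = 0`.
theorem GFun_eq (x : ℝ) : GFun x = x ^ 2 * Real.sin x⁻¹ := by
  by_cases hx : x = 0 <;> simp [GFun, hx]

theorem hasDerivAt_GFun_zero : HasDerivAt GFun 0 0 := by
  rw [hasDerivAt_iff_isLittleO_nhds_zero]
  refine Asymptotics.IsBigO.trans_isLittleO (g := fun h : ℝ => h ^ 2) ?_
    (Asymptotics.isLittleO_pow_id one_lt_two)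
  refine Asymptotics.isBigO_of_le _ fun h => ?_
  simp only [zero_add, GFun_eq, ne_eq, OfNat.ofNat_ne_zero, not_false_eq_true, zero_pow, zero_mul,
    sub_zero, smul_zero, norm_mul, norm_pow]
  exact mul_le_of_le_one_right (by positivity) (Real.abs_sin_le_one _)

theorem hasDerivAt_GFun_of_ne_zero {x : ℝ} (hx : x ≠ 0) :
    HasDerivAt GFun (2 * x * Real.sin (1 / x) - Real.cos (1 / x)) x := by
  have hsin : HasDerivAt (fun y : ℝ => Real.sin y⁻¹) (Real.cos x⁻¹ * -(x ^ 2)⁻¹) x :=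
    (Real.hasDerivAt_sin x⁻¹).comp x (hasDerivAt_inv hx)
  rw [funext GFun_eq]
  refine ((hasDerivAt_pow 2 x).fun_mul hsin).congr_deriv ?_
  field_simp
  ring

theorem hasDerivAt_GFun (x : ℝ) : HasDerivAt GFun (gFun x) x := by
  rcases eq_or_ne x 0 with rfl | hx
  · simpa [gFun] using hasDerivAt_GFun_zero
  · simpa [gFun, hx] using hasDerivAt_GFun_of_ne_zero hx

/-- Uniqueness: every solution on `[−2,2]` of the IVP `u' = (1, g(u₁))`,
`u(−2) = (−3, 9 sin(−1/3))` coincides with `t ↦ (t − 1, G(t − 1))`. -/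
theorem stmt_12 (u : ℝ → ℝ × ℝ)
    (hu0 : u (-2) = (-3, 9 * Real.sin (-(1 / 3))))
    (hu : ∀ t ∈ Icc (-2 : ℝ) 2,
      HasDerivWithinAt u (1, gFun ((u t).1)) (Icc (-2 : ℝ) 2) t) :
    ∀ t ∈ Icc (-2 : ℝ) 2, u t = (t - 1, GFun (t - 1)) := by
  have hfst : EqOn (fun t => (u t).1) (· - 1) (Icc (-2) 2) :=
    eqOn_Icc_of_hasDerivWithinAt_eq (f' := fun _ => 1) (fun t ht => (hu t ht).fst)
      (fun t _ => ((hasDerivAt_id t).sub_const 1).hasDerivWithinAt) (by norm_num [hu0])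
  have hsnd : EqOn (fun t => (u t).2) (fun t => GFun (t - 1)) (Icc (-2) 2) :=
    eqOn_Icc_of_hasDerivWithinAt_eq (f' := fun t => gFun (t - 1))
      (fun t ht => by simpa only [show (u t).1 = t - 1 from hfst ht] using (hu t ht).snd)
      (fun t _ => ((hasDerivAt_GFun _).comp_sub_const t 1).hasDerivWithinAt)
      (by norm_num [hu0, GFun_eq])
  exact fun t ht => Prod.ext (hfst ht) (hsnd ht)
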